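/- Let p be an odd prime, n \ge 1, S coprime to p, w an integer, and \alpha,\beta nonnegative integers with 2\alpha+\beta \le n. Then \sum over x in [0,p^n) with x \equiv w (mod p^\alpha) of e^{2\pi i S p^\beta x^2/p^n} equals 0 if p^\alpha \nmid w, and equals p^\beta G(S;p^{n-\beta}) if p^\alpha | w. -/

import Mathlib

/-!
Write `x = w + p^α t` and split `t = u + p^m v` with `m = n - 2α - β`. Modulo `p^n` the phase
`S p^β x²` depends on `v` only through the linear term `2 S (w + p^α u) v / p^α`, so the sum over
`v` is a complete sum of a character of `ℤ/p^α`; as `p` is odd and prime to `S`, it vanishes unless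
`p^α ∣ w`. For `p^α ∣ w` the sum is `p^(α+β) G(S; p^m)`, and the case `α = 1, β = 0` applied to
the residue classes mod `p` gives `G(S; p^(k+2)) = p G(S; p^k)`.
-/

open Finset

noncomputable def Gsum (S : ℤ) (k : ℕ) : ℂ :=
  ∑ x ∈ Finset.range k,
    Complex.exp (2 * Real.pi * Complex.I * ((S * (x : ℤ) ^ 2 : ℤ) : ℂ) / (k : ℂ))

noncomputable def Gsum2 (a b c S : ℤ) (k : ℕ) : ℂ :=
  ∑ x ∈ Finset.range k, ∑ y ∈ Finset.range k,
    Complex.exp (2 * Real.pi * Complex.I *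
      ((S * (a * (x : ℤ) ^ 2 + b * (x : ℤ) * (y : ℤ) + c * (y : ℤ) ^ 2) : ℤ) : ℂ) / (k : ℂ))

open Complex

-- `e(a/k)`; note `expFrac a 0 = 1`, as `a / 0 = 0`.
noncomputable def expFrac (a : ℤ) (k : ℕ) : ℂ :=
  exp (2 * Real.pi * I * a / k)

lemma Gsum_eq_sum_expFrac (S : ℤ) (k : ℕ) :
    Gsum S k = ∑ x ∈ range k, expFrac (S * (x : ℤ) ^ 2) k := rfl

lemma expFrac_add (a b : ℤ) (k : ℕ) : expFrac (a + b) k = expFrac a k * expFrac b k := by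
  rw [expFrac, expFrac, expFrac, ← exp_add]
  push_cast
  ring_nf

lemma expFrac_pow (a : ℤ) (k v : ℕ) : expFrac a k ^ v = expFrac (a * v) k := by
  rw [expFrac, expFrac, ← exp_nat_mul]
  push_cast
  ring_nf

lemma expFrac_eq_one_iff {k : ℕ} (hk : k ≠ 0) (a : ℤ) : expFrac a k = 1 ↔ (k : ℤ) ∣ a := by
  have hk' : (k : ℂ) ≠ 0 := Nat.cast_ne_zero.mpr hk
  have h2πi : 2 * (Real.pi : ℂ) * I ≠ 0 := by simp [Real.pi_ne_zero]
  rw [expFrac, exp_eq_one_iff]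
  constructor
  · rintro ⟨d, hd⟩
    refine ⟨d, ?_⟩
    have : (a : ℂ) = k * d := by
      rw [div_eq_iff hk'] at hd
      apply mul_left_cancel₀ h2πi
      linear_combination hd
    exact_mod_cast this
  · rintro ⟨d, rfl⟩
    exact ⟨d, by push_cast; field_simp⟩

lemma expFrac_add_mul_self (a d : ℤ) (k : ℕ) : expFrac (a + k * d) k = expFrac a k := by
  rcases eq_or_ne k 0 with rfl | hk
  · simp
  · rw [expFrac_add, (expFrac_eq_one_iff hk _).mpr (dvd_mul_right _ _), mul_one]

lemma expFrac_mul_left {d : ℕ} (hd : d ≠ 0) (a : ℤ) (k : ℕ) :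
    expFrac (d * a) (d * k) = expFrac a k := by
  have hd' : (d : ℂ) ≠ 0 := Nat.cast_ne_zero.mpr hd
  rw [expFrac, expFrac]
  congr 1
  push_cast
  field_simp

lemma sum_range_expFrac_mul_eq_zero {k N : ℕ} {c : ℤ} (hc : ¬ (k : ℤ) ∣ c) (hN : k ∣ N) :
    ∑ v ∈ range N, expFrac (c * v) k = 0 := by
  rcases eq_or_ne k 0 with rfl | hk
  · simp [Nat.eq_zero_of_zero_dvd hN]
  have hc' : expFrac c k ≠ 1 := fun h => hc ((expFrac_eq_one_iff hk c).mp h)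
  simp_rw [← expFrac_pow]
  rw [geom_sum_eq hc', expFrac_pow,
    (expFrac_eq_one_iff hk _).mpr ((Int.natCast_dvd_natCast.mpr hN).mul_left c), sub_self, zero_div]

section Decomposition

variable {M : Type*} [AddCommMonoid M]

lemma sum_range_mul_eq_sum_sum (A B : ℕ) (f : ℕ → M) :
    ∑ x ∈ range (A * B), f x = ∑ u ∈ range A, ∑ v ∈ range B, f (u + A * v) := by
  rw [sum_comm]
  induction B with
  | zero => simp
  | succ B ih =>
    rw [Nat.mul_succ, sum_range_add, ih, sum_range_succ _ B]
    simp only [add_comm (A * B)]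

lemma Function.Periodic.sum_range_mul {A : ℕ} {f : ℕ → M} (hf : Function.Periodic f A)
    (B : ℕ) :
    ∑ x ∈ range (A * B), f x = B • ∑ x ∈ range A, f x := by
  rw [sum_range_mul_eq_sum_sum, smul_sum]
  refine sum_congr rfl fun u _ => ?_
  have hu : ∀ v : ℕ, f (u + A * v) = f u := fun v => by
    simpa [mul_comm] using (hf.nat_mul v) u
  simp [hu]

lemma sum_filter_mod_eq {A r : ℕ} (hr : r < A) (B : ℕ) (f : ℕ → M) :
    ∑ x ∈ (range (A * B)).filter (· % A = r), f x = ∑ v ∈ range B, f (r + A * v) := by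
  rw [sum_filter, sum_range_mul_eq_sum_sum, sum_eq_single_of_mem r (mem_range.mpr hr)]
  · refine sum_congr rfl fun v _ => ?_
    rw [if_pos (by simp [Nat.mod_eq_of_lt hr])]
  · intro u hu hur
    refine sum_eq_zero fun v _ => ?_
    rw [if_neg (by simpa [Nat.mod_eq_of_lt (mem_range.mp hu)] using hur)]

lemma sum_filter_intCast_emod_eq {A : ℕ} (hA : A ≠ 0) (B : ℕ) (w : ℤ) (f : ℤ → M) :
    ∑ x ∈ (range (A * B)).filter (fun x : ℕ => (x : ℤ) % A = w % A), f x =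
      ∑ v ∈ range B, f (w % A + A * v) := by
  have hw : 0 ≤ w % A := Int.emod_nonneg w (by exact_mod_cast hA)
  have hwA : (w % A).toNat < A := by
    have := Int.emod_lt_of_pos w (by omega : (0 : ℤ) < A)
    omega
  have hfilter : (range (A * B)).filter (fun x : ℕ => (x : ℤ) % A = w % A) =
      (range (A * B)).filter (· % A = (w % A).toNat) := by
    refine filter_congr fun x _ => ?_
    omega
  rw [hfilter, sum_filter_mod_eq hwA]
  push_cast
  rw [Int.toNat_of_nonneg hw]

end Decomposition

lemma sum_expFrac_pow_mul_sq {q : ℕ} (hq : q ≠ 0) (S : ℤ) (α β m : ℕ) :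
    ∑ t ∈ range (q ^ (m + α + β)),
        expFrac (S * (q : ℤ) ^ β * ((q : ℤ) ^ α * t) ^ 2) (q ^ (m + 2 * α + β)) =
      (q : ℂ) ^ (α + β) * Gsum S (q ^ m) := by
  have hterm : ∀ t : ℕ,
      expFrac (S * (q : ℤ) ^ β * ((q : ℤ) ^ α * t) ^ 2) (q ^ (m + 2 * α + β)) =
        expFrac (S * (t : ℤ) ^ 2) (q ^ m) := fun t => by
    rw [show q ^ (m + 2 * α + β) = q ^ (2 * α + β) * q ^ m by ring,
      ← expFrac_mul_left (pow_ne_zero _ hq) (S * (t : ℤ) ^ 2)]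
    congr 1
    push_cast
    ring
  have hper : Function.Periodic (fun t : ℕ => expFrac (S * (t : ℤ) ^ 2) (q ^ m)) (q ^ m) :=
    fun t => by
      dsimp only
      rw [← expFrac_add_mul_self (S * (t : ℤ) ^ 2) (S * (2 * t + q ^ m)) (q ^ m)]
      congr 1
      push_cast
      ring
  simp_rw [hterm]
  rw [show q ^ (m + α + β) = q ^ m * q ^ (α + β) by ring, hper.sum_range_mul,
    Gsum_eq_sum_expFrac, nsmul_eq_mul]
  push_cast
  rfl

lemma sum_expFrac_shifted_sq_eq_zero {q : ℕ} (hq : q ≠ 0) (S : ℤ) (hS : IsCoprime (2 * S) q)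
    {α : ℕ} {w : ℤ} (hw : ¬ (q : ℤ) ^ α ∣ w) (β m : ℕ) :
    ∑ t ∈ range (q ^ (m + α + β)),
        expFrac (S * (q : ℤ) ^ β * (w + (q : ℤ) ^ α * t) ^ 2) (q ^ (m + 2 * α + β)) = 0 := by
  rw [show q ^ (m + α + β) = q ^ m * q ^ (α + β) by ring, sum_range_mul_eq_sum_sum]
  refine sum_eq_zero fun u _ => ?_
  set x : ℤ := w + (q : ℤ) ^ α * u
  have hx : ¬ (q : ℤ) ^ α ∣ 2 * S * x := fun h =>
    hw ((dvd_add_left (dvd_mul_right _ _)).mp (hS.pow_right.symm.dvd_of_dvd_mul_left h))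
  set N := q ^ (m + 2 * α + β) with hN
  have hterm : ∀ v : ℕ, expFrac (S * (q : ℤ) ^ β * (w + (q : ℤ) ^ α * ↑(u + q ^ m * v)) ^ 2) N =
      expFrac (S * (q : ℤ) ^ β * x ^ 2) N * expFrac (2 * S * x * v) (q ^ α) :=
    fun v => by
      have harg : S * (q : ℤ) ^ β * (w + (q : ℤ) ^ α * ↑(u + q ^ m * v)) ^ 2 =
          S * (q : ℤ) ^ β * x ^ 2 + ↑(q ^ (m + α + β)) * (2 * S * x * v) +
            ↑N * (S * (q : ℤ) ^ m * v ^ 2) := by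
        push_cast [hN]
        ring
      rw [← expFrac_mul_left (pow_ne_zero (m + α + β) hq) (2 * S * x * v),
        show q ^ (m + α + β) * q ^ α = N by ring, ← expFrac_add,
        harg, expFrac_add_mul_self]
  rw [sum_congr rfl fun v _ => hterm v, ← mul_sum,
    sum_range_expFrac_mul_eq_zero hx (pow_dvd_pow q (Nat.le_add_right α β)), mul_zero]

lemma Gsum_pow_add_two {q : ℕ} (hq : q ≠ 0) (S : ℤ) (hS : IsCoprime (2 * S) q) (m : ℕ) :
    Gsum S (q ^ (m + 2)) = q * Gsum S (q ^ m) := by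
  rw [Gsum_eq_sum_expFrac, show range (q ^ (m + 2)) = range (q * q ^ (m + 1)) by ring_nf,
    sum_range_mul_eq_sum_sum, sum_eq_single_of_mem 0 (mem_range.mpr (Nat.pos_of_ne_zero hq))]
  · simpa using sum_expFrac_pow_mul_sq hq S 1 0 m
  · intro r hr hr0
    have hqr : ¬ (q : ℤ) ^ 1 ∣ r := by
      rw [pow_one, Int.natCast_dvd_natCast]
      exact Nat.not_dvd_of_pos_of_lt (Nat.pos_of_ne_zero hr0) (mem_range.mp hr)
    simpa using sum_expFrac_shifted_sq_eq_zero hq S hS hqr 0 m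

lemma Gsum_pow_add_two_mul {q : ℕ} (hq : q ≠ 0) (S : ℤ) (hS : IsCoprime (2 * S) q) (m a : ℕ) :
    Gsum S (q ^ (m + 2 * a)) = q ^ a * Gsum S (q ^ m) := by
  induction a with
  | zero => simp
  | succ a ih =>
    rw [show m + 2 * (a + 1) = m + 2 * a + 2 by ring, Gsum_pow_add_two hq S hS, ih, pow_succ]
    ring

lemma sum_residueClass_expFrac_sq {q : ℕ} (hq : q ≠ 0) (S : ℤ) (hS : IsCoprime (2 * S) q)
    (w : ℤ) (α β m : ℕ) :
    ∑ x ∈ (range (q ^ (m + 2 * α + β))).filter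
        (fun x : ℕ => (x : ℤ) % (q : ℤ) ^ α = w % (q : ℤ) ^ α),
        expFrac (S * (q : ℤ) ^ β * (x : ℤ) ^ 2) (q ^ (m + 2 * α + β)) =
      if (q : ℤ) ^ α ∣ w then (q : ℂ) ^ (α + β) * Gsum S (q ^ m) else 0 := by
  have hA := sum_filter_intCast_emod_eq (pow_ne_zero α hq) (q ^ (m + α + β)) w
    (fun y => expFrac (S * (q : ℤ) ^ β * y ^ 2) (q ^ (m + 2 * α + β)))
  rw [← pow_add, show α + (m + α + β) = m + 2 * α + β by ring] at hA
  push_cast at hA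
  rw [hA]
  split_ifs with hw
  · simpa [Int.emod_eq_zero_of_dvd hw] using sum_expFrac_pow_mul_sq hq S α β m
  · refine sum_expFrac_shifted_sq_eq_zero hq S hS (fun h => hw ?_) β m
    rwa [Int.dvd_iff_emod_eq_zero, Int.emod_emod, ← Int.dvd_iff_emod_eq_zero] at h

theorem stmt_8_general (p : ℕ) (hp : p.Prime) (hodd : p ≠ 2) (n : ℕ)
    (S : ℤ) (hS : IsCoprime S (p : ℤ)) (w : ℤ) (α β : ℕ)
    (h : 2 * α + β ≤ n) :
    (¬ (p : ℤ) ^ α ∣ w →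
      ∑ x ∈ (Finset.range (p ^ n)).filter (fun x : ℕ => (x : ℤ) % (p : ℤ) ^ α = w % (p : ℤ) ^ α),
          Complex.exp (2 * Real.pi * Complex.I *
            ((S * (p : ℤ) ^ β * (x : ℤ) ^ 2 : ℤ) : ℂ) / ((p : ℂ) ^ n)) = 0) ∧
    ((p : ℤ) ^ α ∣ w →
      ∑ x ∈ (Finset.range (p ^ n)).filter (fun x : ℕ => (x : ℤ) % (p : ℤ) ^ α = w % (p : ℤ) ^ α),
          Complex.exp (2 * Real.pi * Complex.I *
            ((S * (p : ℤ) ^ β * (x : ℤ) ^ 2 : ℤ) : ℂ) / ((p : ℂ) ^ n)) =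
        (p : ℂ) ^ β * Gsum S (p ^ (n - β))) := by
  have h2S : IsCoprime (2 * S) p := by
    have h2p : Nat.Coprime 2 p := Nat.coprime_two_left.mpr (hp.odd_of_ne_two hodd)
    exact IsCoprime.mul_left (by exact_mod_cast Nat.isCoprime_iff_coprime.mpr h2p) hS
  obtain ⟨m, rfl⟩ : ∃ m, n = m + 2 * α + β := ⟨n - (2 * α + β), by omega⟩
  have hexp : ∀ a : ℤ, exp (2 * Real.pi * I * a / (p : ℂ) ^ (m + 2 * α + β)) =
      expFrac a (p ^ (m + 2 * α + β)) := fun a => by simp [expFrac]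
  simp only [hexp, sum_residueClass_expFrac_sq hp.ne_zero S h2S]
  refine ⟨fun hw => if_neg hw, fun hw => ?_⟩
  rw [if_pos hw, show m + 2 * α + β - β = m + 2 * α by omega,
    Gsum_pow_add_two_mul hp.ne_zero S h2S, pow_add]
  ring

theorem stmt_8 (p : ℕ) (hp : p.Prime) (hodd : p ≠ 2) (n : ℕ) (hn : 0 < n)
    (S : ℤ) (hS : IsCoprime S (p : ℤ)) (w : ℤ) (α β : ℕ) (hα : α ≤ n) (hβ : β ≤ n)
    (h : 2 * α + β ≤ n) :
    (¬ (p : ℤ) ^ α ∣ w →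
      ∑ x ∈ (Finset.range (p ^ n)).filter (fun x : ℕ => (x : ℤ) % (p : ℤ) ^ α = w % (p : ℤ) ^ α),
          Complex.exp (2 * Real.pi * Complex.I *
            ((S * (p : ℤ) ^ β * (x : ℤ) ^ 2 : ℤ) : ℂ) / ((p : ℂ) ^ n)) = 0) ∧
    ((p : ℤ) ^ α ∣ w →
      ∑ x ∈ (Finset.range (p ^ n)).filter (fun x : ℕ => (x : ℤ) % (p : ℤ) ^ α = w % (p : ℤ) ^ α),
          Complex.exp (2 * Real.pi * Complex.I *
            ((S * (p : ℤ) ^ β * (x : ℤ) ^ 2 : ℤ) : ℂ) / ((p : ℂ) ^ n)) =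
        (p : ℂ) ^ β * Gsum S (p ^ (n - β))) :=
  stmt_8_general p hp hodd n S hS w α β h
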